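/- arXiv:1911.06705 — 8 statements merged into one kernel-verified Lean document; each statement's English description precedes it below -/
import Mathlib

section
/- If Z is a zero forcing set of a digraph D and M is a matrix in S(D), then any vector x in the kernel of M whose support is disjoint from Z must be the zero vector. -/
/-- The set of out-neighbors of `v` in the digraph with arc relation `A`. -/
def Nout {V : Type} (A : V → V → Prop) (v : V) : Set V := {w | A v w}

/-- The set of in-neighbors of `v`. -/
def Nin {V : Type} (A : V → V → Prop) (v : V) : Set V := {w | A w v}

/-- One application of the color change rule to the set `S` of filled vertices. -/
def Bstep {V : Type} (A : V → V → Prop) (S : Set V) : Set V :=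
  S ∪ {w | ∃ v ∈ S, Nout A v \ S = {w}}

/-- `S` is a zero forcing set: iterating the color change rule fills all vertices. -/
def IsZFS {V : Type} (A : V → V → Prop) (S : Set V) : Prop :=
  ∃ t, (Bstep A)^[t] S = Set.univ

/-- The failed zero forcing number: the maximum cardinality of a failed zero forcing set. -/
noncomputable def Fnum {V : Type} (A : V → V → Prop) : ℕ :=
  sSup {k | ∃ S : Set V, ¬ IsZFS A S ∧ S.ncard = k}

/-- The zero forcing number: the minimum cardinality of a zero forcing set. -/
noncomputable def Znum {V : Type} (A : V → V → Prop) : ℕ :=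
  sInf {k | ∃ S : Set V, IsZFS A S ∧ S.ncard = k}

/-- `W` is a critical set: `W` is nonempty and no vertex outside `W` has exactly one
out-neighbor in `W`. -/
def IsCritical {V : Type} (A : V → V → Prop) (W : Set V) : Prop :=
  W.Nonempty ∧ ∀ v ∈ Wᶜ, (Nout A v ∩ W).ncard ≠ 1

/-- `D` is a directed cycle: either a single vertex with no arcs, or the vertices can be
cyclically labeled so that the arcs are exactly the consecutive ones. -/
def IsDirectedCycle {V : Type} [Fintype V] (A : V → V → Prop) : Prop :=
  (Fintype.card V = 1 ∧ ∀ u v : V, ¬ A u v) ∨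
  (2 ≤ Fintype.card V ∧ ∃ e : ZMod (Fintype.card V) ≃ V,
      ∀ i j : ZMod (Fintype.card V), A (e i) (e j) ↔ j = i + 1)

/-! A vector in the kernel of `M` that vanishes on the filled set `S` also vanishes on every
vertex `w` forced by some `v ∈ S`: in row `v` of `M x = 0`, every other term is killed either by
`x` (on `S`) or by the pattern of `M` (off `N⁺(v)`), leaving `M v w * x w = 0` with
`M v w ≠ 0`. Since the color change rule eventually fills `V`, `x = 0`. -/

open Set Matrix

variable {V R : Type} [Fintype V] [Semiring R] {A : V → V → Prop} {M : Matrix V V R}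
  {x : V → R} {S : Set V}

theorem mulVec_apply_eq_of_forces (hM : ∀ i j, i ≠ j → M i j ≠ 0 → A i j)
    (hS : EqOn x 0 S) {v w : V} (hv : v ∈ S) (hforce : Nout A v \ S = {w}) :
    (M *ᵥ x) v = M v w * x w := by
  refine Finset.sum_eq_single_of_mem w (Finset.mem_univ w) fun j _ hjw => ?_
  by_cases hjS : j ∈ S
  · simp [hS hjS]
  have hMvj : M v j = 0 := by
    by_contra hMvj
    have hj : j ∈ Nout A v \ S := ⟨hM v j (ne_of_mem_of_not_mem hv hjS) hMvj, hjS⟩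
    exact hjw (by rwa [hforce] at hj)
  simp [hMvj]

theorem eqOn_Bstep_of_mulVec_eq_zero [NoZeroDivisors R]
    (hM : ∀ i j, i ≠ j → (M i j ≠ 0 ↔ A i j)) (hker : M *ᵥ x = 0) (hS : EqOn x 0 S) :
    EqOn x 0 (Bstep A S) := by
  rintro w (hw | ⟨v, hv, hforce⟩)
  · exact hS hw
  have hw : w ∈ Nout A v \ S := hforce.symm ▸ rfl
  have hMvw : M v w ≠ 0 := (hM v w (ne_of_mem_of_not_mem hv hw.2)).2 hw.1
  have hrow : M v w * x w = 0 := by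
    rw [← mulVec_apply_eq_of_forces (fun i j hij => (hM i j hij).1) hS hv hforce, hker]
    rfl
  exact (mul_eq_zero.1 hrow).resolve_left hMvw

theorem eq_zero_of_isZFS [NoZeroDivisors R] (hM : ∀ i j, i ≠ j → (M i j ≠ 0 ↔ A i j))
    (hker : M *ᵥ x = 0) (hZ : IsZFS A S) (hS : EqOn x 0 S) : x = 0 := by
  obtain ⟨t, ht⟩ := hZ
  have hfilled : EqOn x 0 ((Bstep A)^[t] S) :=
    Function.Iterate.rec (EqOn x 0) hS (fun _ => eqOn_Bstep_of_mulVec_eq_zero hM hker) t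
  rwa [ht, eqOn_univ] at hfilled

theorem stmt_0_general {V : Type} [Fintype V]
    (A : V → V → Prop)
    (Z : Set V) (hZ : IsZFS A Z)
    (M : Matrix V V ℝ) (hM : ∀ i j : V, i ≠ j → (M i j ≠ 0 ↔ A i j))
    (x : V → ℝ) (hker : M.mulVec x = 0)
    (hsupp : ∀ i : V, x i ≠ 0 → i ∉ Z) :
    x = 0 :=
  eq_zero_of_isZFS hM hker hZ fun i hi => by_contra fun hxi => hsupp i hxi hi

theorem stmt_0 {V : Type} [Fintype V] [DecidableEq V]
    (A : V → V → Prop) (hA : Irreflexive A)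
    (Z : Set V) (hZ : IsZFS A Z)
    (M : Matrix V V ℝ) (hM : ∀ i j : V, i ≠ j → (M i j ≠ 0 ↔ A i j))
    (x : V → ℝ) (hker : M.mulVec x = 0)
    (hsupp : ∀ i : V, x i ≠ 0 → i ∉ Z) :
    x = 0 :=
  stmt_0_general A Z hZ M hM x hker hsupp
end

section
/- For a simple digraph D on n vertices and 1 ≤ k ≤ n, the failed zero forcing number F(D) equals n − k if and only if the smallest cardinality of any critical set in D is k. -/
/-!
A set `S` fails to force exactly when the color change rule stalls at a proper superset `T`
of `S`, and `T` is stalled precisely when its complement is critical. Hence the failed zero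
forcing sets are the sets disjoint from some critical set, and the largest one is the
complement of a smallest critical set.
-/

variable {V : Type} (A : V → V → Prop)

lemma id_le_bstep : id ≤ Bstep A := fun _ => Set.subset_union_left

lemma bstep_mono : Monotone (Bstep A) := by
  intro S T hST x hx
  rcases hx with hxS | ⟨v, hvS, hv⟩
  · exact Or.inl (hST hxS)
  by_cases hxT : x ∈ T
  · exact Or.inl hxT
  have hx : x ∈ Nout A v \ S := hv ▸ rfl
  refine Or.inr ⟨v, hST hvS, Set.Subset.antisymm ?_ ?_⟩
  · exact hv ▸ Set.sdiff_subset_sdiff_right hST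
  · exact Set.singleton_subset_iff.mpr ⟨hx.1, hxT⟩

lemma bstep_eq_self_iff (T : Set V) :
    Bstep A T = T ↔ ∀ v ∈ T, (Nout A v ∩ Tᶜ).ncard ≠ 1 := by
  rw [Bstep, Set.union_eq_left]
  constructor
  · intro hT v hv hcard
    obtain ⟨w, hw⟩ := Set.ncard_eq_one.mp hcard
    have hwT : w ∈ T := hT ⟨v, hv, hw⟩
    exact (hw.symm ▸ rfl : w ∈ Nout A v ∩ Tᶜ).2 hwT
  · rintro hT w ⟨v, hv, hvw⟩
    exact absurd (by rw [← Set.sdiff_eq, hvw, Set.ncard_singleton]) (hT v hv)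

lemma isCritical_compl_iff (T : Set V) :
    IsCritical A Tᶜ ↔ T ≠ Set.univ ∧ Bstep A T = T := by
  rw [IsCritical, Set.nonempty_compl, compl_compl, bstep_eq_self_iff]

lemma exists_bstep_iterate_fixed [Finite V] (S : Set V) :
    ∃ t, Bstep A ((Bstep A)^[t] S) = (Bstep A)^[t] S := by
  have hmono : Monotone fun t => (Bstep A)^[t] S :=
    fun _ _ h => Function.monotone_iterate_of_id_le (id_le_bstep A) h S
  obtain ⟨t, ht⟩ := wellFoundedGT_iff_monotone_chain_condition.mp inferInstance ⟨_, hmono⟩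
  exact ⟨t, by simpa [Function.iterate_succ_apply'] using (ht (t + 1) t.le_succ).symm⟩

lemma not_isZFS_iff_exists_isCritical [Finite V] (S : Set V) :
    ¬ IsZFS A S ↔ ∃ W, IsCritical A W ∧ S ⊆ Wᶜ := by
  constructor
  · intro hS
    obtain ⟨t, ht⟩ := exists_bstep_iterate_fixed A S
    refine ⟨((Bstep A)^[t] S)ᶜ, ?_, ?_⟩
    · exact (isCritical_compl_iff A _).mpr ⟨fun h => hS ⟨t, h⟩, ht⟩
    · rw [compl_compl]
      exact Function.id_le_iterate_of_id_le (id_le_bstep A) t S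
  · rintro ⟨W, hW, hSW⟩ ⟨t, ht⟩
    rw [← compl_compl W, isCritical_compl_iff] at hW
    -- the rule never leaves the stalled set `Wᶜ`
    have hle : (Bstep A)^[t] S ⊆ Wᶜ :=
      (Function.iterate_fixed hW.2 t).subset.trans' ((bstep_mono A).iterate t hSW)
    exact hW.1 (Set.univ_subset_iff.mp (ht ▸ hle))

lemma exists_isLeast_critical_ncard [Nonempty V] :
    ∃ m, IsLeast {m | ∃ W : Set V, IsCritical A W ∧ W.ncard = m} m :=
  ⟨_, Nat.sInf_mem ⟨_, Set.univ, ⟨Set.univ_nonempty, by simp⟩, rfl⟩,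
    fun _ hb => Nat.sInf_le hb⟩

lemma fnum_eq_card_sub [Fintype V] {m : ℕ}
    (hm : IsLeast {m | ∃ W : Set V, IsCritical A W ∧ W.ncard = m} m) :
    Fnum A = Fintype.card V - m := by
  have hcompl (W : Set V) : Wᶜ.ncard = Fintype.card V - W.ncard := by
    rw [Set.ncard_compl, Nat.card_eq_fintype_card]
  obtain ⟨⟨W₀, hW₀, rfl⟩, hleast⟩ := hm
  refine IsGreatest.csSup_eq ⟨⟨W₀ᶜ, ?_, hcompl W₀⟩, ?_⟩
  · exact (not_isZFS_iff_exists_isCritical A _).mpr ⟨W₀, hW₀, le_rfl⟩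
  · rintro _ ⟨S, hS, rfl⟩
    obtain ⟨W, hW, hSW⟩ := (not_isZFS_iff_exists_isCritical A S).mp hS
    calc S.ncard ≤ Wᶜ.ncard := Set.ncard_le_ncard hSW
      _ ≤ Fintype.card V - W₀.ncard := hcompl W ▸ Nat.sub_le_sub_left (hleast ⟨W, hW, rfl⟩) _

theorem stmt_3_general {V : Type} [Fintype V] (A : V → V → Prop)
    (k : ℕ) (hk1 : 1 ≤ k) (hk2 : k ≤ Fintype.card V) :
    Fnum A = Fintype.card V - k ↔
      IsLeast {m | ∃ W : Set V, IsCritical A W ∧ W.ncard = m} k := by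
  have : Nonempty V := Fintype.card_pos_iff.mp (hk1.trans hk2)
  obtain ⟨m, hm⟩ := exists_isLeast_critical_ncard A
  have hm_le : m ≤ Fintype.card V := by
    obtain ⟨W, -, rfl⟩ := hm.1
    exact (Set.ncard_le_card W).trans_eq Nat.card_eq_fintype_card
  rw [fnum_eq_card_sub A hm]
  constructor
  · intro h
    obtain rfl : m = k := by omega
    exact hm
  · intro hk
    rw [hk.unique hm]

theorem stmt_3 {V : Type} [Fintype V] (A : V → V → Prop) (hA : Irreflexive A)
    (k : ℕ) (hk1 : 1 ≤ k) (hk2 : k ≤ Fintype.card V) :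
    Fnum A = Fintype.card V - k ↔
      IsLeast {m | ∃ W : Set V, IsCritical A W ∧ W.ncard = m} k :=
  stmt_3_general A k hk1 hk2
end

section
/- A simple digraph D on n vertices satisfies F(D) = n − 1 if and only if D has a source (a vertex with in-degree 0). -/
/-! Removing a single vertex `v` gives a zero forcing set exactly when `v` has an in-neighbour:
such a neighbour forces `v` at once, while a source can never be forced, so `{v}ᶜ` is then a
fixed point of the color change rule. A failed set of size `n - 1` must be of this form, and
every set of size `n` is a zero forcing set, so the bound `n - 1` is attained exactly when
some `{v}ᶜ` fails. -/

variable {V : Type} (A : V → V → Prop)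

lemma isZFS_univ : IsZFS A (Set.univ : Set V) := ⟨0, rfl⟩

lemma not_isZFS_of_bstep_eq {S : Set V} (hfix : Bstep A S = S) (hS : S ≠ Set.univ) :
    ¬ IsZFS A S := by
  rintro ⟨t, ht⟩
  exact hS (Function.iterate_fixed hfix t ▸ ht)

lemma not_isZFS_empty [Nonempty V] : ¬ IsZFS A (∅ : Set V) :=
  not_isZFS_of_bstep_eq A (by simp [Bstep]) Set.empty_ne_univ

lemma isZFS_compl_singleton_iff (v : V) : IsZFS A ({v}ᶜ : Set V) ↔ ∃ u ≠ v, A u v := by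
  constructor
  · intro hZ
    by_contra! hsource
    refine not_isZFS_of_bstep_eq A ?_ (by simp) hZ
    refine Set.union_eq_self_of_subset_right ?_
    rintro w ⟨u, hu, huw⟩
    have hw : w ∈ Nout A u ∩ {v} := Set.sdiff_compl ▸ huw ▸ Set.mem_singleton w
    rw [Set.mem_singleton_iff.mp hw.2] at hw
    exact (hsource u hu hw.1).elim
  · rintro ⟨u, hu, huv⟩
    refine ⟨1, Set.eq_univ_of_forall fun w => ?_⟩
    rcases eq_or_ne w v with rfl | hw
    · exact Or.inr ⟨u, hu, by rw [Set.sdiff_compl, Set.inter_singleton_of_mem (s := Nout A u) huv]⟩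
    · exact Or.inl hw

lemma exists_eq_compl_singleton_of_ncard_eq [Finite V] [Nonempty V] {S : Set V}
    (hS : S.ncard = Nat.card V - 1) : ∃ v, S = {v}ᶜ := by
  have hc : Sᶜ.ncard = 1 := by
    rw [Set.ncard_compl, hS]
    have := Nat.card_pos (α := V)
    omega
  obtain ⟨v, hv⟩ := Set.ncard_eq_one.mp hc
  exact ⟨v, by rw [← hv, compl_compl]⟩

variable [Fintype V]

lemma ncard_le_card_sub_one_of_not_isZFS {S : Set V} (hS : ¬ IsZFS A S) :
    S.ncard ≤ Fintype.card V - 1 := by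
  have hlt : S.ncard < Nat.card V :=
    Set.ncard_lt_card fun h => hS (h ▸ isZFS_univ A)
  rw [Nat.card_eq_fintype_card] at hlt
  omega

lemma fnum_eq_card_sub_one_iff [Nonempty V] :
    Fnum A = Fintype.card V - 1 ↔ ∃ S : Set V, ¬ IsZFS A S ∧ S.ncard = Fintype.card V - 1 := by
  set T := {k | ∃ S : Set V, ¬ IsZFS A S ∧ S.ncard = k}
  have hub : Fintype.card V - 1 ∈ upperBounds T := by
    rintro k ⟨S, hS, rfl⟩
    exact ncard_le_card_sub_one_of_not_isZFS A hS
  have hne : T.Nonempty := ⟨0, ∅, not_isZFS_empty A, Set.ncard_empty V⟩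
  exact ⟨fun h => h ▸ Nat.sSup_mem hne ⟨_, hub⟩, fun hmem => IsGreatest.csSup_eq ⟨hmem, hub⟩⟩

theorem stmt_4 {V : Type} [Fintype V] [Nonempty V] (A : V → V → Prop)
    (hA : Irreflexive A) :
    Fnum A = Fintype.card V - 1 ↔ ∃ v : V, ∀ u : V, ¬ A u v := by
  rw [fnum_eq_card_sub_one_iff]
  constructor
  · rintro ⟨S, hS, hcard⟩
    rw [← Nat.card_eq_fintype_card] at hcard
    obtain ⟨v, rfl⟩ := exists_eq_compl_singleton_of_ncard_eq hcard
    rw [isZFS_compl_singleton_iff] at hS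
    push Not at hS
    exact ⟨v, fun u huv => hS u (fun h => hA u (h ▸ huv)) huv⟩
  · rintro ⟨v, hv⟩
    refine ⟨{v}ᶜ, ?_, ?_⟩
    · rw [isZFS_compl_singleton_iff]
      exact fun ⟨u, _, huv⟩ => hv u huv
    · rw [Set.ncard_compl, Set.ncard_singleton, Nat.card_eq_fintype_card]
end

section
/- For a simple digraph D, every singleton {v} with v ∈ V(D) is a zero forcing set if and only if D is a directed cycle. -/
/-!
If every singleton forces, then (apart from the one-vertex case) the first forcing step from `{v}`
must be `v` forcing its only out-neighbour, so the digraph is functional, `Nout v = {f v}`. In a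
functional digraph the vertices filled from `{v}` after `t` steps are exactly `f^[k] v` for
`k ≤ t`, so every singleton forces precisely when every vertex reaches every other one under `f`,
i.e. when `f` is a single cycle through all vertices; labelling that cycle along the orbit of a
point gives the cyclic order `ZMod (card V) ≃ V`.
-/

section ZeroForcing

variable {V : Type} {A : V → V → Prop}

theorem mem_bstep_of_nout_eq_singleton {S : Set V} {u w : V} (hu : u ∈ S)
    (h : Nout A u = {w}) : w ∈ Bstep A S := by
  by_cases hw : w ∈ S
  · exact Or.inl hw
  · refine Or.inr ⟨u, hu, ?_⟩
    rw [h, (Set.disjoint_singleton_left.2 hw).sdiff_eq_left]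

theorem exists_nout_eq_singleton_of_isZFS_singleton [Nontrivial V] {v : V} (hvv : ¬ A v v)
    (hv : IsZFS A {v}) : ∃ w, Nout A v = {w} := by
  by_contra! h
  have hfix : Bstep A {v} = {v} := by
    refine Set.union_eq_left.2 ?_
    rintro w ⟨u, rfl, hu⟩
    rw [Set.sdiff_singleton_eq_self (s := Nout A _) hvv] at hu
    exact absurd hu (h w)
  obtain ⟨t, ht⟩ := hv
  rw [Function.iterate_fixed hfix] at ht
  obtain ⟨w, hw⟩ := exists_ne v
  exact hw (ht.symm ▸ Set.mem_univ w : w ∈ ({v} : Set V))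

variable {f : V → V}

theorem iterate_bstep_singleton (hf : ∀ v, Nout A v = {f v}) (v : V) (t : ℕ) :
    (Bstep A)^[t] {v} = {w | ∃ k ≤ t, f^[k] v = w} := by
  induction t with
  | zero => ext w; simp [eq_comm]
  | succ t ih =>
    rw [Function.iterate_succ_apply', ih]
    ext w
    constructor
    · rintro (⟨k, hk, rfl⟩ | ⟨_, ⟨k, hk, rfl⟩, hw⟩)
      · exact ⟨k, by omega, rfl⟩
      · have : w ∈ Nout A (f^[k] v) := (hw.superset (Set.mem_singleton w)).1
        rw [hf, Set.mem_singleton_iff] at this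
        exact ⟨k + 1, by omega, by rw [Function.iterate_succ_apply', this]⟩
    · rintro ⟨k, hk, rfl⟩
      rcases hk.lt_or_eq with hk | rfl
      · exact Or.inl ⟨k, by omega, rfl⟩
      · rw [Function.iterate_succ_apply']
        exact mem_bstep_of_nout_eq_singleton ⟨t, le_rfl, rfl⟩ (hf _)

theorem isZFS_singleton_iff [Finite V] (hf : ∀ v, Nout A v = {f v}) (v : V) :
    IsZFS A {v} ↔ ∀ w, ∃ k, f^[k] v = w := by
  simp only [IsZFS, iterate_bstep_singleton hf, Set.eq_univ_iff_forall, Set.mem_setOf_eq]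
  constructor
  · rintro ⟨t, ht⟩ w
    obtain ⟨k, -, hk⟩ := ht w
    exact ⟨k, hk⟩
  · intro h
    choose k hk using h
    obtain ⟨t, ht⟩ := (Set.finite_range k).bddAbove
    exact ⟨t, fun w => ⟨k w, ht ⟨w, rfl⟩, hk w⟩⟩

end ZeroForcing

section CyclicOrder

variable {V : Type}

open Function in
theorem exists_zmod_equiv_of_forall_exists_iterate [Fintype V] [Nonempty V] {f : V → V}
    (hreach : ∀ v w, ∃ k, f^[k] v = w) :
    ∃ e : ZMod (Fintype.card V) ≃ V, ∀ i, e (i + 1) = f (e i) := by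
  obtain ⟨v₀⟩ := ‹Nonempty V›
  set p := minimalPeriod f v₀
  have hp : 0 < p := by
    obtain ⟨k, hk⟩ := hreach (f v₀) v₀
    exact IsPeriodicPt.minimalPeriod_pos k.succ_pos (by rwa [IsPeriodicPt, IsFixedPt,
      iterate_succ_apply])
  have : NeZero p := ⟨hp.ne'⟩
  let g : ZMod p → V := fun i => f^[i.val] v₀
  have hg_natCast (k : ℕ) : g k = f^[k] v₀ := by
    simp only [g, ZMod.val_natCast]
    exact iterate_mod_minimalPeriod_eq
  have hg_succ (i : ZMod p) : g (i + 1) = f (g i) := by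
    rw [← ZMod.natCast_zmod_val i, ← Nat.cast_succ, hg_natCast, hg_natCast,
      iterate_succ_apply']
  have hg : Bijective g := by
    refine ⟨fun i j hij => ZMod.val_injective p ?_, fun w => ?_⟩
    · exact iterate_injOn_Iio_minimalPeriod (ZMod.val_lt i) (ZMod.val_lt j) hij
    · obtain ⟨k, rfl⟩ := hreach v₀ w
      exact ⟨k, hg_natCast k⟩
  have hcard : Fintype.card V = p := by
    rw [← Fintype.card_congr (Equiv.ofBijective g hg), ZMod.card]
  rw [hcard]
  exact ⟨Equiv.ofBijective g hg, hg_succ⟩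

theorem forall_nout_eq_singleton_iff {A : V → V → Prop} {n : ℕ} (e : ZMod n ≃ V) :
    (∀ i, Nout A (e i) = {e (i + 1)}) ↔ ∀ i j, A (e i) (e j) ↔ j = i + 1 := by
  refine forall_congr' fun i => ?_
  rw [Set.ext_iff, ← e.forall_congr_right]
  simp only [Nout, Set.mem_setOf_eq, Set.mem_singleton_iff, e.apply_eq_iff_eq]

theorem exists_iterate_zmod_succ {n : ℕ} [NeZero n] (e : ZMod n ≃ V) (v w : V) :
    ∃ k, (fun u => e (e.symm u + 1))^[k] v = w := by
  have key (i : ZMod n) (k : ℕ) : (fun u => e (e.symm u + 1))^[k] (e i) = e (i + k) := by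
    induction k with
    | zero => simp
    | succ k ih =>
      rw [Function.iterate_succ_apply', ih, Equiv.symm_apply_apply, Nat.cast_succ, add_assoc]
  obtain ⟨i, rfl⟩ := e.surjective v
  obtain ⟨j, rfl⟩ := e.surjective w
  exact ⟨(j - i).val, by rw [key, ZMod.natCast_zmod_val, add_sub_cancel]⟩

theorem isDirectedCycle_iff_of_nontrivial [Fintype V] [Nontrivial V] {A : V → V → Prop} :
    IsDirectedCycle A ↔ ∃ e : ZMod (Fintype.card V) ≃ V, ∀ i j, A (e i) (e j) ↔ j = i + 1 := by
  have h : 2 ≤ Fintype.card V := Fintype.one_lt_card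
  rw [IsDirectedCycle, or_iff_right fun h₁ => by omega, and_iff_right h]

end CyclicOrder

theorem stmt_7 {V : Type} [Fintype V] [Nonempty V] (A : V → V → Prop)
    (hA : Irreflexive A) :
    (∀ v : V, IsZFS A {v}) ↔ IsDirectedCycle A := by
  rcases subsingleton_or_nontrivial V with hV | hV
  · have hcard : Fintype.card V = 1 :=
      le_antisymm (Fintype.card_le_one_iff_subsingleton.2 hV) Fintype.card_pos
    refine iff_of_true (fun v => ⟨0, ?_⟩) (Or.inl ⟨hcard, fun u v huv => hA u ?_⟩)
    · exact Set.eq_univ_of_forall fun w => Subsingleton.elim w v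
    · rwa [Subsingleton.elim v u] at huv
  rw [isDirectedCycle_iff_of_nontrivial]
  constructor
  · intro hZ
    choose f hf using fun v => exists_nout_eq_singleton_of_isZFS_singleton (hA v) (hZ v)
    obtain ⟨e, he⟩ := exists_zmod_equiv_of_forall_exists_iterate
      fun v => (isZFS_singleton_iff hf v).1 (hZ v)
    exact ⟨e, (forall_nout_eq_singleton_iff e).1 fun i => by rw [hf, he]⟩
  · rintro ⟨e, he⟩ v
    have hf (u : V) : Nout A u = {e (e.symm u + 1)} := by
      simpa using (forall_nout_eq_singleton_iff e).2 he (e.symm u)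
    exact (isZFS_singleton_iff hf v).2 (exists_iterate_zmod_succ e v)
end

section
/- A simple digraph D on n vertices has no critical set of cardinality less than n if and only if D is a directed cycle on n vertices. -/
theorem stmt_8 {V : Type} [Fintype V] [Nonempty V] (A : V → V → Prop)
    (hA : Irreflexive A) :
    (∀ W : Set V, IsCritical A W → Fintype.card V ≤ W.ncard) ↔
      IsDirectedCycle A := by
  constructor
  · -- forward direction
    intro h
    rcases eq_or_lt_of_le (show 1 ≤ Fintype.card V from Fintype.card_pos (α := V)) with hc1 | hc2
    · -- card = 1
      left
      refine ⟨hc1.symm, ?_⟩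
      haveI : Subsingleton V := Fintype.card_le_one_iff_subsingleton.mp hc1.ge
      intro u v hv
      rw [Subsingleton.elim v u] at hv
      exact hA u hv
    · right
      have hc2' : 2 ≤ Fintype.card V := hc2
      refine ⟨hc2', ?_⟩
      -- Step 0: any nonempty proper set is not critical
      have hstep : ∀ W : Set V, W.Nonempty → W ≠ Set.univ →
          ∃ v ∈ Wᶜ, (Nout A v ∩ W).ncard = 1 := by
        intro W hne hnu
        by_contra hcon
        push_neg at hcon
        have hcrit : IsCritical A W := ⟨hne, hcon⟩
        have h1 := h W hcrit
        have h2 : W.ncard < Fintype.card V := by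
          have := Set.ncard_lt_ncard (Set.ssubset_univ_iff.mpr hnu) Set.finite_univ
          rwa [Set.ncard_univ, Nat.card_eq_fintype_card] at this
        omega
      -- Step A: every vertex has exactly one out-neighbor
      have hout : ∀ v : V, ∃ w, Nout A v = {w} := by
        intro v
        obtain ⟨u, hu⟩ := Fintype.exists_ne_of_one_lt_card hc2 v
        obtain ⟨x, hx, hcard⟩ := hstep ({v}ᶜ) ⟨u, hu⟩
          (by intro hE; have : v ∈ ({v}ᶜ : Set V) := hE ▸ Set.mem_univ v; simp at this)
        have hxv : x = v := by simpa using hx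
        rw [hxv] at hcard
        have hsub : Nout A v ∩ {v}ᶜ = Nout A v := by
          apply Set.inter_eq_left.mpr
          intro y hy
          simp only [Set.mem_compl_iff, Set.mem_singleton_iff]
          rintro rfl
          exact hA _ hy
        rw [hsub] at hcard
        exact Set.ncard_eq_one.mp hcard
      choose σ hσ using hout
      have hAiff : ∀ v w, A v w ↔ w = σ v := by
        intro v w
        have : w ∈ Nout A v ↔ w ∈ ({σ v} : Set V) := by rw [hσ v]
        simpa [Nout] using this
      -- Step B: σ is surjective, hence bijective
      have hsurj : Function.Surjective σ := by
        intro w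
        obtain ⟨u, hu⟩ := Fintype.exists_ne_of_one_lt_card hc2 w
        obtain ⟨v, hv, hcard⟩ := hstep {w} ⟨w, rfl⟩
          (by intro hE; have : u ∈ ({w} : Set V) := hE ▸ Set.mem_univ u; exact hu this)
        obtain ⟨x, hx⟩ := Set.ncard_eq_one.mp hcard
        have hwx : w ∈ Nout A v ∩ {w} := by
          have : x ∈ Nout A v ∩ {w} := hx ▸ rfl
          have hxw : x = w := this.2
          exact hxw ▸ this
        exact ⟨v, ((hAiff v w).mp hwx.1).symm⟩
      have hinj : Function.Injective σ := Finite.injective_iff_surjective.mpr hsurj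
      have hbij : Function.Bijective σ := ⟨hinj, hsurj⟩
      -- periodicity
      obtain ⟨v₀⟩ := ‹Nonempty V›
      set π : Equiv.Perm V := Equiv.ofBijective σ hbij with hπ
      have hπσ : ⇑π = σ := rfl
      have hper : Function.IsPeriodicPt σ (orderOf π) v₀ := by
        unfold Function.IsPeriodicPt Function.IsFixedPt
        rw [← hπσ, Equiv.Perm.iterate_eq_pow, pow_orderOf_eq_one]
        rfl
      have hmpos : 0 < Function.minimalPeriod σ v₀ :=
        hper.minimalPeriod_pos (orderOf_pos π)
      set m := Function.minimalPeriod σ v₀ with hm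
      -- Step C: the orbit of v₀ is everything
      set Wo : Set V := Set.range (fun k : ℕ => σ^[k] v₀) with hWo
      have hWoclosed : ∀ v : V, v ∉ Wo → σ v ∉ Wo := by
        intro v hv hmem
        obtain ⟨k, hk⟩ := hmem
        rcases k with _ | k'
        · -- σ v = v₀ = σ^[m] v₀
          simp only [Function.iterate_zero_apply] at hk
          have hv₀ : v₀ = σ (σ^[m-1] v₀) := by
            conv_lhs => rw [← Function.iterate_minimalPeriod (f := σ) (x := v₀)]
            rw [← hm, ← Function.iterate_succ_apply' σ (m-1) v₀]
            congr 1
            omega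
          have hσv : σ v = σ (σ^[m-1] v₀) := by rw [← hk]; exact hv₀
          exact hv ⟨m - 1, (hinj hσv).symm⟩
        · have hk' : σ (σ^[k'] v₀) = σ v := by
            rw [← Function.iterate_succ_apply' σ k' v₀]; exact hk
          exact hv ⟨k', hinj hk'⟩
      have hWouniv : Wo = Set.univ := by
        by_contra hne
        obtain ⟨v, hv, hcard⟩ := hstep Wo ⟨v₀, 0, rfl⟩ hne
        have : Nout A v ∩ Wo = ∅ := by
          rw [hσ v]
          apply Set.eq_empty_iff_forall_notMem.mpr
          rintro x ⟨hx1, hx2⟩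
          rw [Set.mem_singleton_iff] at hx1
          exact hWoclosed v hv (hx1 ▸ hx2)
        rw [this] at hcard
        simp at hcard
      haveI := Classical.decEq V
      -- Step D: m = Fintype.card V
      have hmn : m = Fintype.card V := by
        have hinjOn : Set.InjOn (fun k => σ^[k] v₀) ↑(Finset.range m) := by
          rw [Finset.coe_range]
          exact Function.iterate_injOn_Iio_minimalPeriod
        have hF : ((Finset.range m).image (fun k => σ^[k] v₀)).card = m := by
          rw [Finset.card_image_of_injOn hinjOn, Finset.card_range]
        have hle : m ≤ Fintype.card V := by
          rw [← hF]
          exact Finset.card_le_univ _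
        have hge : Fintype.card V ≤ m := by
          rw [← hF, ← Finset.card_univ]
          apply Finset.card_le_card
          intro v _
          have hvW : v ∈ Wo := hWouniv ▸ Set.mem_univ v
          obtain ⟨k, hk⟩ := hvW
          rw [Finset.mem_image]
          exact ⟨k % m, Finset.mem_range.mpr (Nat.mod_lt k hmpos),
            by rw [← hk]; exact Function.iterate_mod_minimalPeriod_eq⟩
        omega
      -- Step E: build the equivalence
      haveI : NeZero (Fintype.card V) := ⟨by omega⟩
      haveI : Fact (1 < Fintype.card V) := ⟨hc2⟩
      set f : ZMod (Fintype.card V) → V := fun i => σ^[i.val] v₀ with hf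
      have hfinj : Function.Injective f := by
        intro i j hij
        apply ZMod.val_injective (Fintype.card V)
        apply Function.iterate_injOn_Iio_minimalPeriod
          (by rw [← hm, hmn]; exact Set.mem_Iio.mpr (ZMod.val_lt i))
          (by rw [← hm, hmn]; exact Set.mem_Iio.mpr (ZMod.val_lt j))
        exact hij
      have hfbij : Function.Bijective f :=
        (Fintype.bijective_iff_injective_and_card f).mpr ⟨hfinj, by rw [ZMod.card]⟩
      have hfsucc : ∀ i, f (i + 1) = σ (f i) := by
        intro i
        have h1 : (i + 1).val = (i.val + 1) % Fintype.card V := by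
          rw [ZMod.val_add, ZMod.val_one]
        rw [hf]
        simp only [h1]
        have : σ^[(i.val + 1) % Fintype.card V] v₀ = σ^[i.val + 1] v₀ := by
          have := Function.iterate_mod_minimalPeriod_eq (f := σ) (x := v₀) (n := i.val + 1)
          rwa [← hm, hmn] at this
        rw [this, Function.iterate_succ_apply' σ i.val v₀]
      refine ⟨Equiv.ofBijective f hfbij, ?_⟩
      intro i j
      have : Equiv.ofBijective f hfbij i = f i := rfl
      rw [this, show Equiv.ofBijective f hfbij j = f j from rfl, hAiff]
      constructor
      · intro hfj
        apply hfinj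
        rw [hfsucc i, hfj]
      · rintro rfl
        rw [hfsucc i]
  · -- reverse direction
    rintro (⟨h1, hno⟩ | ⟨h2, e, he⟩) W hW
    · haveI : Subsingleton V := Fintype.card_le_one_iff_subsingleton.mp h1.le
      obtain ⟨w, hw⟩ := hW.1
      have hWu : W = Set.univ := by
        ext x
        simp only [Set.mem_univ, iff_true]
        rwa [Subsingleton.elim x w]
      rw [hWu, Set.ncard_univ, Nat.card_eq_fintype_card]
    · by_contra hlt
      push_neg at hlt
      have hne : W ≠ Set.univ := by
        rintro rfl
        rw [Set.ncard_univ, Nat.card_eq_fintype_card] at hlt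
        omega
      haveI : NeZero (Fintype.card V) := ⟨by omega⟩
      have key : ∀ j : ZMod (Fintype.card V), e j ∉ W → e (j + 1) ∉ W := by
        intro j hj hmem
        apply hW.2 (e j) hj
        have hNW : Nout A (e j) ∩ W = {e (j + 1)} := by
          ext x
          constructor
          · rintro ⟨hx, hxW⟩
            obtain ⟨k, rfl⟩ := e.surjective x
            have := (he j k).mp hx
            rw [this]
            exact rfl
          · rintro rfl
            exact ⟨(he j (j + 1)).mpr rfl, hmem⟩
        rw [hNW, Set.ncard_singleton]
      obtain ⟨v, hv⟩ := (Set.ne_univ_iff_exists_notMem W).mp hne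
      obtain ⟨j, rfl⟩ := e.surjective v
      have hall : ∀ k : ℕ, e (j + (k : ZMod (Fintype.card V))) ∉ W := by
        intro k
        induction k with
        | zero => simpa using hv
        | succ k ih =>
          have := key _ ih
          have harg : j + ((k : ZMod (Fintype.card V)) + 1) = j + (k : ZMod (Fintype.card V)) + 1 := by ring
          rw [Nat.cast_succ, harg]
          exact this
      obtain ⟨w, hw⟩ := hW.1
      obtain ⟨j', rfl⟩ := e.surjective w
      have := hall (j' - j).val
      rw [ZMod.natCast_rightInverse (j' - j)] at this
      have harg2 : j + (j' - j) = j' := by ring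
      rw [harg2] at this
      exact this hw
end

section
/- If a simple digraph D satisfies F(D) < Z(D), then every vertex v of D is either a sink or has out-degree at least Z(D). -/
section Aux
variable {V : Type} [Fintype V] {A : V → V → Prop}

lemma subset_bstep (S : Set V) : S ⊆ Bstep A S := Set.subset_union_left

lemma subset_bstep_iterate (S : Set V) (t : ℕ) : S ⊆ (Bstep A)^[t] S := by
  induction t with
  | zero => exact subset_rfl
  | succ n ih =>
    rw [Function.iterate_succ_apply']
    exact ih.trans (subset_bstep _)

lemma exists_bstep_fixed (S : Set V) :
    ∃ k, Bstep A ((Bstep A)^[k] S) = (Bstep A)^[k] S := by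
  by_contra hc
  push_neg at hc
  have key : ∀ m, m ≤ ((Bstep A)^[m] S).ncard := by
    intro m
    induction m with
    | zero => exact Nat.zero_le _
    | succ n ih =>
      have h1 : (Bstep A)^[n] S ⊂ (Bstep A)^[n + 1] S := by
        rw [Function.iterate_succ_apply']
        exact (subset_bstep _).ssubset_of_ne (fun he => hc n he.symm)
      have := Set.ncard_lt_ncard h1 (Set.toFinite _)
      omega
  have h1 := key (Fintype.card V + 1)
  have h2 : ((Bstep A)^[Fintype.card V + 1] S).ncard ≤ Fintype.card V := by
    have := Set.ncard_le_ncard (Set.subset_univ ((Bstep A)^[Fintype.card V + 1] S))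
      Set.finite_univ
    simpa [Set.ncard_univ, Nat.card_eq_fintype_card] using this
  omega

lemma zfs_mono {S T : Set V} (hST : S ⊆ T) (hS : IsZFS A S) : IsZFS A T := by
  obtain ⟨k, hk⟩ := exists_bstep_fixed (A := A) T
  set C := (Bstep A)^[k] T with hC
  have hTC : T ⊆ C := subset_bstep_iterate T k
  have main : ∀ t, (Bstep A)^[t] S ⊆ C := by
    intro t
    induction t with
    | zero => exact hST.trans hTC
    | succ n ih =>
      rw [Function.iterate_succ_apply']
      intro x hx
      rcases hx with hx | hx
      · exact ih hx
      · obtain ⟨u, hu, huw⟩ := hx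
        by_cases hxC : x ∈ C
        · exact hxC
        · have hxB : x ∈ Bstep A C := by
            refine Set.mem_union_right _ ⟨u, ih hu, ?_⟩
            apply Set.eq_singleton_iff_unique_mem.2
            refine ⟨⟨?_, hxC⟩, ?_⟩
            · have hx' : x ∈ Nout A u \ (Bstep A)^[n] S := by rw [huw]; rfl
              exact hx'.1
            · intro y hy
              have hy' : y ∈ Nout A u \ (Bstep A)^[n] S :=
                ⟨hy.1, fun hyS => hy.2 (ih hyS)⟩
              rw [huw] at hy'
              exact hy'
          rwa [hk] at hxB
  obtain ⟨t, ht⟩ := hS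
  exact ⟨k, Set.eq_univ_of_univ_subset (ht ▸ main t)⟩

lemma zfs_of_bstep {S : Set V} (hS : IsZFS A (Bstep A S)) : IsZFS A S := by
  obtain ⟨t, ht⟩ := hS
  exact ⟨t + 1, by rwa [Function.iterate_succ_apply]⟩

end Aux

theorem stmt_9 {V : Type} [Fintype V] (A : V → V → Prop) (hA : Irreflexive A)
    (h : Fnum A < Znum A) :
    ∀ v : V, Nout A v = ∅ ∨ Znum A ≤ (Nout A v).ncard := by
  intro v
  by_contra hcon
  push_neg at hcon
  obtain ⟨hne, hlt⟩ := hcon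
  obtain ⟨w, hw⟩ := hne
  have hw : w ∈ Nout A v := hw
  have hvw : v ≠ w := fun he => hA v (he ▸ hw)
  have hvW : v ∉ Nout A v := fun hvv => hA v hvv
  have hZpos : 1 ≤ Znum A := by omega
  have hZn : Znum A ≤ Fintype.card V := by
    have huniv : IsZFS A (Set.univ : Set V) := ⟨0, rfl⟩
    have hmem : (Set.univ : Set V).ncard ∈ {k | ∃ S : Set V, IsZFS A S ∧ S.ncard = k} :=
      ⟨Set.univ, huniv, rfl⟩
    have := Nat.sInf_le hmem
    simpa [Znum, Set.ncard_univ, Nat.card_eq_fintype_card] using this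
  have hB0sub : insert v (Nout A v \ {w}) ⊆ {w}ᶜ := by
    intro x hx
    rcases hx with rfl | hx
    · exact hvw
    · exact hx.2
  have hWpos : 0 < (Nout A v).ncard := (Set.ncard_pos (Set.toFinite _)).2 ⟨w, hw⟩
  have hB0card : (insert v (Nout A v \ {w})).ncard = (Nout A v).ncard := by
    rw [Set.ncard_insert_of_notMem (fun hh => hvW hh.1) (Set.toFinite _),
      Set.ncard_diff_singleton_of_mem hw]
    omega
  have hcompl : ({w}ᶜ : Set V).ncard = Fintype.card V - 1 := by
    rw [Set.compl_eq_univ_diff, Set.ncard_diff_singleton_of_mem (Set.mem_univ w)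
      , Set.ncard_univ, Nat.card_eq_fintype_card]
  obtain ⟨S, hB0S, hSsub, hScard⟩ := Set.exists_subsuperset_card_eq hB0sub
    (by omega : (insert v (Nout A v \ {w})).ncard ≤ Znum A - 1)
    (by omega : Znum A - 1 ≤ ({w}ᶜ : Set V).ncard)
  have hwS : w ∉ S := fun hws => hSsub hws rfl
  have hSnot : ¬ IsZFS A S := by
    intro hzfs
    have hmem : S.ncard ∈ {k | ∃ S : Set V, IsZFS A S ∧ S.ncard = k} := ⟨S, hzfs, rfl⟩
    have hZle : Znum A ≤ S.ncard := Nat.sInf_le hmem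
    rw [hScard] at hZle
    omega
  have hinscard : (insert w S).ncard = Znum A := by
    rw [Set.ncard_insert_of_notMem hwS (Set.toFinite _), hScard]
    omega
  have hins : IsZFS A (insert w S) := by
    by_contra hnot
    have hbdd : BddAbove {k | ∃ S : Set V, ¬ IsZFS A S ∧ S.ncard = k} := by
      refine ⟨Fintype.card V, ?_⟩
      rintro k ⟨T, -, rfl⟩
      have := Set.ncard_le_ncard (Set.subset_univ T) Set.finite_univ
      simpa [Set.ncard_univ, Nat.card_eq_fintype_card] using this
    have hmem : Znum A ∈ {k | ∃ S : Set V, ¬ IsZFS A S ∧ S.ncard = k} :=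
      ⟨insert w S, hnot, hinscard⟩
    have := le_csSup hbdd hmem
    have hF : Znum A ≤ Fnum A := this
    omega
  have hvS : v ∈ S := hB0S (Set.mem_insert v _)
  have hforce : Nout A v \ S = {w} := by
    apply Set.eq_singleton_iff_unique_mem.2
    refine ⟨⟨hw, hwS⟩, ?_⟩
    intro y hy
    by_contra hyw
    exact hy.2 (hB0S (Set.mem_insert_of_mem _ ⟨hy.1, hyw⟩))
  have hsub : insert w S ⊆ Bstep A S := by
    intro x hx
    rcases hx with rfl | hx
    · exact Set.mem_union_right _ ⟨v, hvS, hforce⟩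
    · exact Set.mem_union_left _ hx
  exact hSnot (zfs_of_bstep (zfs_mono hsub hins))
end

section
/- Let D be a digraph whose underlying graph is the star K_{1,t}, t ≥ 1. Then F(D) = t if D is an oriented graph or some leaf has in-degree 0, and F(D) = t − 1 otherwise. -/
lemma my_not_isZFS_of_fixed {V : Type} {A : V → V → Prop} {S : Set V}
    (h : Bstep A S = S) (hne : S ≠ Set.univ) : ¬ IsZFS A S := by
  rintro ⟨n, hn⟩
  rw [Function.iterate_fixed h] at hn
  exact hne hn

lemma my_isZFS_of_bstep {V : Type} {A : V → V → Prop} {S : Set V}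
    (h : Bstep A S = Set.univ) : IsZFS A S := ⟨1, by simpa using h⟩

lemma my_isZFS_univ {V : Type} (A : V → V → Prop) : IsZFS A (Set.univ : Set V) := ⟨0, rfl⟩

lemma my_Fnum_eq {V : Type} (A : V → V → Prop) (m : ℕ)
    (h1 : ∃ S : Set V, ¬ IsZFS A S ∧ S.ncard = m)
    (h2 : ∀ S : Set V, ¬ IsZFS A S → S.ncard ≤ m) : Fnum A = m := by
  apply le_antisymm
  · exact csSup_le ⟨m, h1⟩ (by rintro k ⟨S, hS, rfl⟩; exact h2 S hS)
  · exact le_csSup ⟨m, by rintro k ⟨S, hS, rfl⟩; exact h2 S hS⟩ h1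

theorem stmt_16 (t : ℕ) (ht : 1 ≤ t)
    (A : Option (Fin t) → Option (Fin t) → Prop)
    (hedge : ∀ i : Fin t, A none (some i) ∨ A (some i) none)
    (hleaf : ∀ i j : Fin t, ¬ A (some i) (some j))
    (hloop : ¬ A none none) :
    (((∀ u v, A u v → ¬ A v u) ∨ (∃ i : Fin t, ∀ u, ¬ A u (some i))) →
        Fnum A = t) ∧
    (¬ ((∀ u v, A u v → ¬ A v u) ∨ (∃ i : Fin t, ∀ u, ¬ A u (some i))) →
        Fnum A = t - 1) := by
  have hcard : Nat.card (Option (Fin t)) = t + 1 := by simp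
  have hcompl1 : ∀ x : Option (Fin t), ({x}ᶜ : Set (Option (Fin t))).ncard = t := by
    intro x
    have h := Set.ncard_add_ncard_compl ({x} : Set (Option (Fin t)))
    rw [Set.ncard_singleton, hcard] at h
    omega
  have hle_univ : ∀ S : Set (Option (Fin t)), S.ncard ≤ t + 1 := by
    intro S
    have := Set.ncard_le_ncard (Set.subset_univ S) Set.finite_univ
    simpa [Set.ncard_univ, hcard] using this
  have heq_univ : ∀ S : Set (Option (Fin t)), t + 1 ≤ S.ncard → S = Set.univ := by
    intro S hS
    exact Set.eq_of_subset_of_ncard_le (Set.subset_univ S)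
      (by rw [Set.ncard_univ, hcard]; exact hS) Set.finite_univ
  have hub : ∀ S : Set (Option (Fin t)), ¬ IsZFS A S → S.ncard ≤ t := by
    intro S hS
    by_contra hlt
    push_neg at hlt
    have : S = Set.univ := heq_univ S (by have := hle_univ S; omega)
    exact hS (this ▸ my_isZFS_univ A)
  constructor
  · intro hor
    apply my_Fnum_eq A t _ hub
    by_cases hex : ∃ j : Fin t, ¬ A none (some j)
    · obtain ⟨j, hj⟩ := hex
      refine ⟨({some j}ᶜ : Set (Option (Fin t))), ?_, hcompl1 _⟩
      apply my_not_isZFS_of_fixed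
      · unfold Bstep
        rw [Set.union_eq_self_of_subset_right]
        rintro w ⟨v, hv, heq⟩
        have hw : w ∈ Nout A v \ ({some j}ᶜ : Set (Option (Fin t))) := by
          rw [heq]; exact rfl
        obtain ⟨hA, hw2⟩ := hw
        simp only [Set.notMem_compl_iff, Set.mem_singleton_iff] at hw2
        subst hw2
        match v with
        | none => exact absurd hA hj
        | some k => exact absurd hA (hleaf k j)
      · intro h
        have : (some j : Option (Fin t)) ∈ ({some j}ᶜ : Set (Option (Fin t))) :=
          h.symm ▸ Set.mem_univ _
        simp at this
    · push_neg at hex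
      have hori : ∀ u v, A u v → ¬ A v u := by
        rcases hor with h | ⟨i, hi⟩
        · exact h
        · exact absurd (hex i) (hi none)
      have hno : ∀ i : Fin t, ¬ A (some i) none := fun i => hori _ _ (hex i)
      refine ⟨({none}ᶜ : Set (Option (Fin t))), ?_, hcompl1 _⟩
      apply my_not_isZFS_of_fixed
      · unfold Bstep
        rw [Set.union_eq_self_of_subset_right]
        rintro w ⟨v, hv, heq⟩
        have hw : w ∈ Nout A v \ ({none}ᶜ : Set (Option (Fin t))) := by
          rw [heq]; exact rfl
        obtain ⟨hA, hw2⟩ := hw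
        simp only [Set.notMem_compl_iff, Set.mem_singleton_iff] at hw2
        subst hw2
        match v with
        | none => exact absurd rfl hv
        | some k => exact absurd hA (hno k)
      · intro h
        have : (none : Option (Fin t)) ∈ ({none}ᶜ : Set (Option (Fin t))) :=
          h.symm ▸ Set.mem_univ _
        simp at this
  · intro hfail
    push_neg at hfail
    obtain ⟨hno, hall⟩ := hfail
    -- hno : ∃ u v, A u v ∧ A v u ;  hall : ∀ i, ∃ u, A u (some i)
    have hAll : ∀ j : Fin t, A none (some j) := by
      intro j
      obtain ⟨u, hu⟩ := hall j
      match u with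
      | none => exact hu
      | some k => exact absurd hu (hleaf k j)
    obtain ⟨i0, hi0⟩ : ∃ i : Fin t, A (some i) none := by
      obtain ⟨u, v, h1, h2⟩ := hno
      match u, v with
      | none, none => exact absurd h1 hloop
      | none, some i => exact ⟨i, h2⟩
      | some i, none => exact ⟨i, h1⟩
      | some i, some j => exact absurd h1 (hleaf i j)
    -- every set of size t (complement of a singleton) is a ZFS
    have keyZ : ∀ x : Option (Fin t), IsZFS A ({x}ᶜ : Set (Option (Fin t))) := by
      intro x
      apply my_isZFS_of_bstep
      apply Set.eq_univ_of_univ_subset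
      intro w _
      by_cases hw : w ∈ ({x}ᶜ : Set (Option (Fin t)))
      · exact Or.inl hw
      · simp only [Set.notMem_compl_iff, Set.mem_singleton_iff] at hw
        subst hw
        match w with
        | none =>
          refine Or.inr ⟨some i0, by simp, ?_⟩
          ext u
          simp only [Set.mem_diff, Set.mem_singleton_iff, Set.notMem_compl_iff,
            Set.mem_singleton_iff, Nout, Set.mem_setOf_eq]
          constructor
          · rintro ⟨_, h⟩; exact h
          · rintro rfl; exact ⟨hi0, rfl⟩
        | some j =>
          refine Or.inr ⟨none, by simp, ?_⟩
          ext u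
          simp only [Set.mem_diff, Set.mem_singleton_iff, Set.notMem_compl_iff,
            Set.mem_singleton_iff, Nout, Set.mem_setOf_eq]
          constructor
          · rintro ⟨_, h⟩; exact h
          · rintro rfl; exact ⟨hAll j, rfl⟩
    have hub' : ∀ S : Set (Option (Fin t)), ¬ IsZFS A S → S.ncard ≤ t - 1 := by
      intro S hS
      by_contra hlt
      push_neg at hlt
      have h1 : t ≤ S.ncard := by omega
      have h2 := hle_univ S
      rcases eq_or_lt_of_le h1 with heq | hlt2
      · -- ncard S = t, so Sᶜ is a singleton
        have hc := Set.ncard_add_ncard_compl S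
        rw [← heq, hcard] at hc
        obtain ⟨x, hx⟩ := Set.ncard_eq_one.mp (by omega : Sᶜ.ncard = 1)
        have : S = ({x}ᶜ : Set (Option (Fin t))) := by rw [← hx, compl_compl]
        exact hS (this ▸ keyZ x)
      · exact hS ((heq_univ S (by omega)) ▸ my_isZFS_univ A)
    apply my_Fnum_eq A (t - 1) _ hub'
    rcases Nat.lt_or_ge t 2 with h2 | h2
    · -- t = 1 : use the empty set
      refine ⟨∅, ?_, by simp; omega⟩
      apply my_not_isZFS_of_fixed
      · unfold Bstep
        rw [Set.union_eq_self_of_subset_right]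
        rintro w ⟨v, hv, -⟩
        exact absurd hv (Set.notMem_empty v)
      · intro h
        have : (none : Option (Fin t)) ∈ (∅ : Set (Option (Fin t))) :=
          h.symm ▸ Set.mem_univ _
        exact this
    · -- t ≥ 2 : remove two leaves
      set a : Fin t := ⟨0, by omega⟩
      set b : Fin t := ⟨1, by omega⟩
      have hab : (some a : Option (Fin t)) ≠ some b := by
        simp [a, b, Fin.ext_iff]
      refine ⟨({some a, some b}ᶜ : Set (Option (Fin t))), ?_, ?_⟩
      · apply my_not_isZFS_of_fixed
        · unfold Bstep
          rw [Set.union_eq_self_of_subset_right]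
          rintro w ⟨v, hv, heq⟩
          have hw : w ∈ Nout A v \ ({some a, some b}ᶜ : Set (Option (Fin t))) := by
            rw [heq]; exact rfl
          obtain ⟨hA, hw2⟩ := hw
          simp only [Set.notMem_compl_iff, Set.mem_insert_iff, Set.mem_singleton_iff] at hw2
          have hvnone : v = none := by
            match v with
            | none => rfl
            | some k =>
              rcases hw2 with rfl | rfl
              · exact absurd hA (hleaf k a)
              · exact absurd hA (hleaf k b)
          subst hvnone
          have hma : (some a : Option (Fin t)) ∈ Nout A none \ ({some a, some b}ᶜ : Set (Option (Fin t))) := by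
            refine ⟨hAll a, ?_⟩
            simp
          have hmb : (some b : Option (Fin t)) ∈ Nout A none \ ({some a, some b}ᶜ : Set (Option (Fin t))) := by
            refine ⟨hAll b, ?_⟩
            simp
          rw [heq] at hma hmb
          simp only [Set.mem_singleton_iff] at hma hmb
          exact absurd (hma.trans hmb.symm) hab
        · intro h
          have : (some a : Option (Fin t)) ∈ ({some a, some b}ᶜ : Set (Option (Fin t))) :=
            h.symm ▸ Set.mem_univ _
          simp at this
      · have h := Set.ncard_add_ncard_compl ({some a, some b} : Set (Option (Fin t)))
        rw [Set.ncard_pair hab, hcard] at h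
        omega
end

section
/- An oriented cycle (an orientation of the undirected cycle C_n) has failed zero forcing number 0 if it is a directed cycle and n − 1 otherwise. -/
section aux
open Fin.NatCast Fin.CommRing

variable {n : ℕ} [NeZero n]

lemma cyc_closure (c : Fin n) (hc : ∀ x y : Fin n, ∃ m : ℕ, y = x + (m : Fin n) * c)
    (S : Set (Fin n)) (hcl : ∀ v ∈ S, v + c ∈ S) {a : Fin n} (ha : a ∈ S) :
    S = Set.univ := by
  have key : ∀ m : ℕ, a + (m : Fin n) * c ∈ S := by
    intro m
    induction m with
    | zero => simpa using ha
    | succ m ih =>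
      have h1 : a + ((m + 1 : ℕ) : Fin n) * c = (a + (m : Fin n) * c) + c := by
        push_cast; ring
      rw [h1]
      exact hcl _ ih
  ext y
  simp only [Set.mem_univ, iff_true]
  obtain ⟨m, hm⟩ := hc a y
  rw [hm]; exact key m

lemma empty_not_zfs (A : Fin n → Fin n → Prop) : ¬ IsZFS A (∅ : Set (Fin n)) := by
  have hstep : Bstep A (∅ : Set (Fin n)) = ∅ := by
    simp [Bstep]
  have hiter : ∀ t, (Bstep A)^[t] (∅ : Set (Fin n)) = ∅ := by
    intro t
    induction t with
    | zero => rfl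
    | succ t ih => rw [Function.iterate_succ_apply', ih, hstep]
  rintro ⟨t, ht⟩
  rw [hiter t] at ht
  have : (0 : Fin n) ∈ (∅ : Set (Fin n)) := ht ▸ Set.mem_univ _
  exact this

lemma bstep_mono_s18 (A : Fin n → Fin n → Prop) (S : Set (Fin n)) : S ⊆ Bstep A S :=
  Set.subset_union_left

lemma directed_zfs (A : Fin n → Fin n → Prop) (c : Fin n)
    (hc : ∀ x y : Fin n, ∃ m : ℕ, y = x + (m : Fin n) * c)
    (hN : ∀ v : Fin n, Nout A v = {v + c}) :
    ∀ S : Set (Fin n), S.Nonempty → IsZFS A S := by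
  have step : ∀ S : Set (Fin n), S.Nonempty → S ≠ Set.univ →
      ∃ v ∈ S, v + c ∉ S ∧ v + c ∈ Bstep A S := by
    intro S hne hnu
    obtain ⟨a, ha⟩ := hne
    have hexists : ∃ v ∈ S, v + c ∉ S := by
      by_contra h
      push_neg at h
      exact hnu (cyc_closure c hc S h ha)
    obtain ⟨v, hv, hvc⟩ := hexists
    refine ⟨v, hv, hvc, Or.inr ⟨v, hv, ?_⟩⟩
    rw [hN v]
    ext x
    simp only [Set.mem_diff, Set.mem_singleton_iff]
    constructor
    · rintro ⟨h1, _⟩; exact h1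
    · rintro rfl; exact ⟨rfl, hvc⟩
  have main : ∀ k : ℕ, ∀ S : Set (Fin n), S.Nonempty → Sᶜ.ncard ≤ k →
      (Bstep A)^[k] S = Set.univ := by
    intro k
    induction k with
    | zero =>
      intro S hne h0
      have : Sᶜ = ∅ := by
        rw [← Set.ncard_eq_zero (Set.toFinite _)]
        omega
      have : S = Set.univ := by
        rw [← compl_compl S, this, Set.compl_empty]
      simpa using this
    | succ k ih =>
      intro S hne hk
      by_cases hu : S = Set.univ
      · subst hu
        rw [Function.iterate_succ_apply]
        have hB : Bstep A Set.univ = Set.univ :=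
          Set.eq_univ_of_univ_subset (bstep_mono_s18 A _)
        rw [hB]
        exact ih Set.univ ⟨0, Set.mem_univ 0⟩ (by simp)
      · obtain ⟨v, hv, hvc, hvB⟩ := step S hne hu
        rw [Function.iterate_succ_apply]
        apply ih (Bstep A S) (hne.mono (bstep_mono_s18 A S))
        have hsub2 : (Bstep A S)ᶜ ⊆ Sᶜ \ {v + c} := by
          intro x hx
          simp only [Set.mem_compl_iff] at hx
          refine ⟨fun hxS => hx (bstep_mono_s18 A S hxS), ?_⟩
          simp only [Set.mem_singleton_iff]
          rintro rfl
          exact hx hvB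
        have h1 : (Bstep A S)ᶜ.ncard ≤ (Sᶜ \ {v + c}).ncard :=
          Set.ncard_le_ncard hsub2 (Set.toFinite _)
        have h2 : (Sᶜ \ {v + c}).ncard = Sᶜ.ncard - 1 :=
          Set.ncard_diff_singleton_of_mem hvc
        have h3 : 0 < Sᶜ.ncard := (Set.ncard_pos (Set.toFinite _)).mpr ⟨v + c, hvc⟩
        omega
  intro S hne
  refine ⟨n, main n S hne ?_⟩
  have := Set.ncard_le_ncard (Set.subset_univ Sᶜ) (Set.toFinite _)
  simpa [Set.ncard_univ] using this

end aux
section aux2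
open Fin.NatCast Fin.CommRing
variable {n : ℕ} [NeZero n]

lemma exists_break (f : Fin n → Prop) (hnotall : ∃ i, ¬ f i) (hsome : ∃ j, f j) :
    ∃ i : Fin n, ¬ f i ∧ f (i + 1) := by
  by_contra h
  push_neg at h
  -- h : ∀ i, ¬ f i → ¬ f (i+1), i.e. f (i+1) → f i
  obtain ⟨j, hj⟩ := hsome
  obtain ⟨i0, hi0⟩ := hnotall
  have key : ∀ m : ℕ, f (j - (m : Fin n)) := by
    intro m
    induction m with
    | zero => simpa using hj
    | succ m ih =>
      by_contra hne
      have h1 : (j - ((m + 1 : ℕ) : Fin n)) + 1 = j - (m : Fin n) := by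
        push_cast; ring
      have := h _ hne
      rw [h1] at this
      exact this ih
  have := key ((j - i0).val)
  rw [Fin.cast_val_eq_self, sub_sub_cancel] at this
  exact hi0 this

end aux2
theorem stmt_18 (n : ℕ) (hn : 3 ≤ n) [NeZero n] (A : Fin n → Fin n → Prop)
    (horient : ∀ u v : Fin n, A u v → ¬ A v u)
    (hsub : ∀ i j : Fin n, A i j → (j = i + 1 ∨ i = j + 1))
    (hedge : ∀ i : Fin n, A i (i + 1) ∨ A (i + 1) i) :
    (((∀ i : Fin n, A i (i + 1)) ∨ (∀ i : Fin n, A (i + 1) i)) → Fnum A = 0) ∧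
    (¬ ((∀ i : Fin n, A i (i + 1)) ∨ (∀ i : Fin n, A (i + 1) i)) →
        Fnum A = n - 1) := by
  open Fin.NatCast Fin.CommRing in
  have hc1 : ∀ x y : Fin n, ∃ m : ℕ, y = x + (m : Fin n) * 1 := by
    intro x y
    exact ⟨(y - x).val, by rw [Fin.cast_val_eq_self]; ring⟩
  open Fin.NatCast Fin.CommRing in
  have hcm1 : ∀ x y : Fin n, ∃ m : ℕ, y = x + (m : Fin n) * (-1) := by
    intro x y
    exact ⟨(x - y).val, by rw [Fin.cast_val_eq_self]; ring⟩
  have hbdd : BddAbove {k | ∃ S : Set (Fin n), ¬ IsZFS A S ∧ S.ncard = k} := by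
    refine ⟨n, ?_⟩
    rintro k ⟨S, _, rfl⟩
    have := Set.ncard_le_ncard (Set.subset_univ S) (Set.toFinite _)
    simpa [Set.ncard_univ, Nat.card_eq_fintype_card] using this
  have h0mem : (0 : ℕ) ∈ {k | ∃ S : Set (Fin n), ¬ IsZFS A S ∧ S.ncard = k} :=
    ⟨∅, empty_not_zfs A, Set.ncard_empty _⟩
  constructor
  · -- directed cycle case
    intro hdir
    have hzfs : ∀ S : Set (Fin n), S.Nonempty → IsZFS A S := by
      rcases hdir with hfwd | hbwd
      · apply directed_zfs A 1 hc1
        intro v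
        ext w
        simp only [Nout, Set.mem_setOf_eq, Set.mem_singleton_iff]
        constructor
        · intro hA
          rcases hsub v w hA with h | h
          · exact h
          · exact absurd hA (by rw [h]; exact horient w (w + 1) (hfwd w))
        · rintro rfl; exact hfwd v
      · apply directed_zfs A (-1) hcm1
        intro v
        ext w
        simp only [Nout, Set.mem_setOf_eq, Set.mem_singleton_iff]
        constructor
        · intro hA
          rcases hsub v w hA with h | h
          · exact absurd hA (by rw [h]; exact horient (v + 1) v (hbwd v))
          · rw [h]; open Fin.CommRing in ring
        · rintro rfl
          have := hbwd (v + -1)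
          simpa using this
    have hset : {k | ∃ S : Set (Fin n), ¬ IsZFS A S ∧ S.ncard = k} = {0} := by
      ext k
      simp only [Set.mem_setOf_eq, Set.mem_singleton_iff]
      constructor
      · rintro ⟨S, hS, rfl⟩
        rcases Set.eq_empty_or_nonempty S with rfl | hne
        · exact Set.ncard_empty _
        · exact absurd (hzfs S hne) hS
      · rintro rfl; exact h0mem
    rw [Fnum, hset, csSup_singleton]
  · -- not directed cycle case
    intro hnot
    push_neg at hnot
    obtain ⟨hnf, hnb⟩ := hnot
    -- find a source
    obtain ⟨i, hi, hi1⟩ := exists_break (fun i => A i (i + 1)) hnf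
      (by
        obtain ⟨j, hj⟩ := hnb
        exact ⟨j, (hedge j).resolve_right hj⟩)
    set u := i + 1 with hu
    have hsource : ∀ v : Fin n, ¬ A v u := by
      intro v hA
      rcases hsub v u hA with h | h
      · -- u = v + 1 so v = i
        have hv : v = i := by
          have : v + 1 = i + 1 := by rw [← h, hu]
          exact add_right_cancel this
        rw [hv] at hA; exact hi hA
      · -- v = u + 1, arc (u+1) → u contradicts A u (u+1)
        rw [h] at hA
        exact horient u (u + 1) hi1 hA
    have hfailed : ¬ IsZFS A ({u}ᶜ : Set (Fin n)) := by
      have hBfix : Bstep A ({u}ᶜ : Set (Fin n)) = {u}ᶜ := by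
        apply Set.union_eq_self_of_subset_right
        rintro w ⟨v, hv, hNv⟩
        simp only [Set.mem_compl_iff, Set.mem_singleton_iff]
        intro hwu
        have hwmem : w ∈ Nout A v \ ({u}ᶜ : Set (Fin n)) := by
          rw [hNv]; rfl
        exact hsource v (hwu ▸ hwmem.1)
      have hiter : ∀ t, (Bstep A)^[t] ({u}ᶜ : Set (Fin n)) = {u}ᶜ := by
        intro t
        induction t with
        | zero => rfl
        | succ t ih => rw [Function.iterate_succ_apply', ih, hBfix]
      rintro ⟨t, ht⟩
      rw [hiter t] at ht
      have : u ∈ ({u}ᶜ : Set (Fin n)) := ht ▸ Set.mem_univ u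
      exact this rfl
    have hcard : ({u}ᶜ : Set (Fin n)).ncard = n - 1 := by
      have h1 : ({u} : Set (Fin n)).ncard = 1 := Set.ncard_singleton u
      have h2 := Set.ncard_add_ncard_compl ({u} : Set (Fin n))
      simp only [Set.ncard_univ, Nat.card_eq_fintype_card, Fintype.card_fin] at h2
      omega
    apply le_antisymm
    · apply csSup_le ⟨0, h0mem⟩
      rintro k ⟨S, hS, rfl⟩
      have hSne : S ≠ Set.univ := by
        rintro rfl
        exact hS ⟨0, rfl⟩
      have hlt : S.ncard < n := by
        have hss : S ⊂ Set.univ := (Set.ssubset_univ_iff).mpr hSne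
        have := Set.ncard_lt_ncard hss (Set.toFinite _)
        simpa [Set.ncard_univ, Nat.card_eq_fintype_card] using this
      omega
    · exact le_csSup hbdd ⟨{u}ᶜ, hfailed, hcard⟩
end
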